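/- arXiv:2408.06127 — 5 statements merged into one kernel-verified Lean document; each statement's English description precedes it below -/
import Mathlib

section
/- Let E be an operator system in B(H). The following are equivalent: (1) E is approximately generated by positives, i.e. the norm closure of the ℂ-linear span of E_+ equals E; (2) for every complex Hilbert space K, every continuous completely positive linear map θ : E → B(K), and every vector v ∈ K such that ⟨θ(x)v, v⟩ = 0 for all x ∈ E, one has θ(x)v = 0 for all x ∈ E. (Condition (2) is the concrete form of the statement that the zero map δ₀ : E → {0} is maximal in the dilation order, i.e. that δ₀ is a boundary representation/extremal point.) -/
/-!
Statement 0: For an operator system `E ⊆ B(H)`, being approximately generated by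
positives is equivalent to the zero map being maximal in the dilation order
(concretely: for every Hilbert space `K`, every continuous completely positive
map `θ : E → B(K)` and every `v ∈ K` with `⟨θ(x)v, v⟩ = 0` for all `x ∈ E`, one
has `θ(x)v = 0` for all `x ∈ E`).
-/

open scoped ComplexOrder

noncomputable section

/-- Positivity of a `d × d` matrix of bounded operators, viewed as an operator on
`H^{⊕ d}`: `⟨X v, v⟩ ≥ 0` for all `v ∈ H^{⊕ d}`. -/
def MatPosOp {H : Type} [NormedAddCommGroup H] [InnerProductSpace ℂ H] {d : ℕ}
    (X : Matrix (Fin d) (Fin d) (H →L[ℂ] H)) : Prop :=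
  ∀ v : Fin d → H, 0 ≤ ∑ i, ∑ j, (inner ℂ (X i j (v j)) (v i) : ℂ)

/-- Positivity of a single bounded operator on `H`. -/
def OpPos {H : Type} [NormedAddCommGroup H] [InnerProductSpace ℂ H]
    (T : H →L[ℂ] H) : Prop :=
  ∀ v : H, 0 ≤ (inner ℂ (T v) v : ℂ)

/-- A continuous linear map `θ : E → B(K)` is completely positive if each
amplification takes positive matrices over `E` to positive matrices over `B(K)`. -/
def IsCPMap {H : Type} [NormedAddCommGroup H] [InnerProductSpace ℂ H]
    {K : Type} [NormedAddCommGroup K] [InnerProductSpace ℂ K]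
    (E : Submodule ℂ (H →L[ℂ] H)) (θ : E →L[ℂ] (K →L[ℂ] K)) : Prop :=
  ∀ (d : ℕ) (X : Matrix (Fin d) (Fin d) E),
    MatPosOp (fun i j => (X i j : H →L[ℂ] H)) →
      MatPosOp (fun i j => θ (X i j))

/-- A positive operator kills every vector on which its quadratic form vanishes
(Cauchy–Schwarz for the positive sesquilinear form `(v,w) ↦ ⟨Tv, w⟩`). -/
lemma oppos_apply_eq_zero {K : Type} [NormedAddCommGroup K] [InnerProductSpace ℂ K]
    (T : K →L[ℂ] K) (hT : OpPos T) (v : K) (hv : (inner ℂ (T v) v : ℂ) = 0) : T v = 0 := by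
  have key : ∀ w : K, (inner ℂ (T v) w : ℂ) + inner ℂ (T w) v = 0 := by
    intro w
    set a : ℂ := inner ℂ (T w) w with ha
    set b : ℂ := (inner ℂ (T v) w : ℂ) + inner ℂ (T w) v with hb
    have ha0 : 0 ≤ a := hT w
    have hab : ∀ t : ℝ, 0 ≤ (t : ℂ) * b + (t : ℂ) ^ 2 * a := by
      intro t
      have h0 := hT (v + (t : ℂ) • w)
      have hexp : (inner ℂ (T (v + (t : ℂ) • w)) (v + (t : ℂ) • w) : ℂ)
          = (t : ℂ) * b + (t : ℂ) ^ 2 * a := by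
        rw [map_add, map_smul]
        simp only [inner_add_left, inner_add_right, inner_smul_left, inner_smul_right,
          Complex.conj_ofReal, hv, hb, ha]
        ring
      rwa [hexp] at h0
    have haim : a.im = 0 := by
      have := ha0
      rw [Complex.le_def] at this
      simpa using this.2.symm
    have hbim : b.im = 0 := by
      have h1 := hab 1
      have h2 := hab (-1)
      rw [Complex.le_def] at h1 h2
      have e1 := h1.2
      have e2 := h2.2
      simp [haim] at e1 e2
      linarith [e1, e2]
    have hre : ∀ t : ℝ, 0 ≤ t * b.re + t ^ 2 * a.re := by
      intro t
      have h1 := hab t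
      rw [Complex.le_def] at h1
      have := h1.1
      push_cast at this
      simpa [Complex.add_re, Complex.mul_re, Complex.ofReal_re, Complex.ofReal_im,
        hbim, haim, pow_two] using this
    have har : 0 ≤ a.re := by
      have := ha0; rw [Complex.le_def] at this; simpa using this.1
    have hbre : b.re = 0 := by
      by_contra hne
      have hD : 0 < a.re + b.re ^ 2 := by positivity
      have h := hre (-(b.re) / (a.re + b.re ^ 2))
      have heq : (-(b.re) / (a.re + b.re ^ 2)) * b.re
          + (-(b.re) / (a.re + b.re ^ 2)) ^ 2 * a.re
          = -((b.re ^ 2 * b.re ^ 2) / (a.re + b.re ^ 2) ^ 2) := by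
        field_simp
        ring
      rw [heq] at h
      have hpos : 0 < b.re ^ 2 * b.re ^ 2 / (a.re + b.re ^ 2) ^ 2 := by positivity
      linarith
    exact Complex.ext hbre hbim
  have key2 : ∀ w : K, (inner ℂ (T v) w : ℂ) = 0 := by
    intro w
    have h1 := key w
    have h2 := key (Complex.I • w)
    rw [map_smul, inner_smul_left, inner_smul_right, Complex.conj_I] at h2
    have h2' : Complex.I * ((inner ℂ (T v) w : ℂ) - inner ℂ (T w) v) = 0 := by
      ring_nf; ring_nf at h2; linear_combination h2
    have h3 : (inner ℂ (T v) w : ℂ) - inner ℂ (T w) v = 0 := by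
      rcases mul_eq_zero.mp h2' with h | h
      · exact absurd h Complex.I_ne_zero
      · exact h
    linear_combination (h1 + h3) / 2
  have := key2 (T v)
  rwa [inner_self_eq_zero] at this

variable {H : Type} [NormedAddCommGroup H] [InnerProductSpace ℂ H]

/-- Diagonal entries of a positive matrix of operators are positive. -/
lemma matpos_diag {d : ℕ} (X : Matrix (Fin d) (Fin d) (H →L[ℂ] H))
    (hX : MatPosOp X) (i : Fin d) : OpPos (X i i) := by
  intro h
  have := hX (fun q => if q = i then h else 0)
  have hsum : ∑ p, ∑ q, (inner ℂ (X p q (if q = i then h else 0))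
      ((if p = i then h else 0) : H) : ℂ) = inner ℂ (X i i h) h := by
    rw [Finset.sum_eq_single i]
    · rw [Finset.sum_eq_single i]
      · simp
      · intro q _ hq; simp [hq]
      · simp
    · intro p _ hp
      rw [Finset.sum_eq_single i] <;> simp [hp]
    · simp
  rwa [hsum] at this

/-- The basic positive combinations extracted from a `2 × 2` compression of a
positive matrix of operators. -/
lemma matpos_offdiag {d : ℕ} (X : Matrix (Fin d) (Fin d) (H →L[ℂ] H))
    (hX : MatPosOp X) {i j : Fin d} (hij : i ≠ j) (c : ℂ) :
    OpPos (X i i + (c * (starRingEnd ℂ) c) • X j j + ((starRingEnd ℂ) c) • X i j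
      + c • X j i) := by
  intro h
  set v : Fin d → H := fun q => if q = i then h else if q = j then ((starRingEnd ℂ) c) • h else 0
    with hv
  have hvi : v i = h := by simp [hv]
  have hvj : v j = ((starRingEnd ℂ) c) • h := by simp [hv, hij.symm]
  have hv0 : ∀ q, q ≠ i → q ≠ j → v q = 0 := by intro q h1 h2; simp [hv, h1, h2]
  have := hX v
  have hinner : ∀ p, ∑ q, (inner ℂ (X p q (v q)) (v p) : ℂ)
      = inner ℂ (X p i (v i)) (v p) + inner ℂ (X p j (v j)) (v p) := by
    intro p
    rw [← Finset.sum_subset (Finset.subset_univ {i, j})]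
    · rw [Finset.sum_pair hij]
    · intro q _ hq
      simp only [Finset.mem_insert, Finset.mem_singleton] at hq
      push_neg at hq
      rw [hv0 q hq.1 hq.2]
      simp
  have houter : ∑ p, ∑ q, (inner ℂ (X p q (v q)) (v p) : ℂ)
      = (inner ℂ (X i i (v i)) (v i) + inner ℂ (X i j (v j)) (v i))
        + (inner ℂ (X j i (v i)) (v j) + inner ℂ (X j j (v j)) (v j)) := by
    rw [Finset.sum_congr rfl (fun p _ => hinner p)]
    rw [← Finset.sum_subset (Finset.subset_univ {i, j})]
    · rw [Finset.sum_pair hij]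
    · intro p _ hp
      simp only [Finset.mem_insert, Finset.mem_singleton] at hp
      push_neg at hp
      rw [hv0 p hp.1 hp.2]
      simp
  rw [houter, hvi, hvj] at this
  have hgoal : (inner ℂ (((X i i + (c * (starRingEnd ℂ) c) • X j j + ((starRingEnd ℂ) c) • X i j
      + c • X j i)) h) h : ℂ)
      = (inner ℂ (X i i h) h + inner ℂ (X i j (((starRingEnd ℂ) c) • h)) h)
        + (inner ℂ (X j i h) (((starRingEnd ℂ) c) • h)
          + inner ℂ (X j j (((starRingEnd ℂ) c) • h)) (((starRingEnd ℂ) c) • h)) := by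
    simp only [ContinuousLinearMap.add_apply, ContinuousLinearMap.smul_apply, map_smul,
      inner_add_left, inner_smul_left, inner_smul_right, RingHom.id_apply, map_mul,
      RingHomCompTriple.comp_apply, Complex.conj_conj]
    ring
  rwa [hgoal]

/-- Every entry of a positive matrix over `E` lies in the linear span of the
positive elements of `E` (by polarization). -/
lemma entry_mem_span (E : Submodule ℂ (H →L[ℂ] H)) {d : ℕ} (X : Matrix (Fin d) (Fin d) E)
    (hX : MatPosOp fun p q => (X p q : H →L[ℂ] H)) (i j : Fin d) :
    (X i j : H →L[ℂ] H) ∈ Submodule.span ℂ {x : H →L[ℂ] H | x ∈ E ∧ OpPos x} := by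
  set S := {x : H →L[ℂ] H | x ∈ E ∧ OpPos x} with hS
  set Y : Matrix (Fin d) (Fin d) (H →L[ℂ] H) := fun p q => (X p q : H →L[ℂ] H) with hY
  by_cases hij : i = j
  · subst hij
    exact Submodule.subset_span ⟨(X i i).2, matpos_diag Y hX i⟩
  · have hq : ∀ c : ℂ,
        (Y i i + (c * (starRingEnd ℂ) c) • Y j j + ((starRingEnd ℂ) c) • Y i j + c • Y j i)
          ∈ Submodule.span ℂ S := by
      intro c
      refine Submodule.subset_span ⟨?_, matpos_offdiag Y hX hij c⟩
      exact add_mem (add_mem (add_mem (X i i).2 (Submodule.smul_mem _ _ (X j j).2))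
        (Submodule.smul_mem _ _ (X i j).2)) (Submodule.smul_mem _ _ (X j i).2)
    have key : Y i j =
        (4⁻¹ : ℂ) • (Y i i + ((1:ℂ) * (starRingEnd ℂ) 1) • Y j j + ((starRingEnd ℂ) (1:ℂ)) • Y i j + (1:ℂ) • Y j i)
        + (4⁻¹ * Complex.I) • (Y i i + (Complex.I * (starRingEnd ℂ) Complex.I) • Y j j + ((starRingEnd ℂ) Complex.I) • Y i j + Complex.I • Y j i)
        - (4⁻¹ : ℂ) • (Y i i + ((-1:ℂ) * (starRingEnd ℂ) (-1:ℂ)) • Y j j + ((starRingEnd ℂ) (-1:ℂ)) • Y i j + (-1:ℂ) • Y j i)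
        - (4⁻¹ * Complex.I) • (Y i i + ((-Complex.I) * (starRingEnd ℂ) (-Complex.I)) • Y j j + ((starRingEnd ℂ) (-Complex.I)) • Y i j + (-Complex.I) • Y j i) := by
      simp only [map_one, map_neg, Complex.conj_I, one_mul, neg_neg, neg_smul, one_smul,
        mul_neg, neg_mul, Complex.I_mul_I]
      match_scalars <;> norm_num [mul_assoc, Complex.I_mul_I]
    show Y i j ∈ Submodule.span ℂ S
    rw [key]
    exact sub_mem (sub_mem (add_mem (Submodule.smul_mem _ _ (hq 1))
      (Submodule.smul_mem _ _ (hq Complex.I))) (Submodule.smul_mem _ _ (hq (-1))))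
      (Submodule.smul_mem _ _ (hq (-Complex.I)))

theorem stmt0 {H : Type} [NormedAddCommGroup H] [InnerProductSpace ℂ H]
    [CompleteSpace H]
    (E : Submodule ℂ (H →L[ℂ] H)) (hE : IsClosed (E : Set (H →L[ℂ] H)))
    (hstar : ∀ x ∈ E, star x ∈ E) :
    closure (↑(Submodule.span ℂ {x : H →L[ℂ] H | x ∈ E ∧ OpPos x}) :
        Set (H →L[ℂ] H)) = (E : Set (H →L[ℂ] H))
    ↔
    ∀ (K : Type) (_ : NormedAddCommGroup K) (_ : InnerProductSpace ℂ K)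
      (_ : CompleteSpace K) (θ : E →L[ℂ] (K →L[ℂ] K)), IsCPMap E θ →
      ∀ v : K, (∀ x : E, (inner ℂ (θ x v) v : ℂ) = 0) → ∀ x : E, θ x v = 0 := by
  constructor
  · -- approximate generation implies the boundary property
    intro hgen K _ _ _ θ hθ v hv x
    have step1 : ∀ y : E, OpPos (y : H →L[ℂ] H) → θ y v = 0 := by
      intro y hy
      have hpos : OpPos (θ y) := by
        intro w
        have hXpos : MatPosOp (fun p q : Fin 1 => (((fun _ _ : Fin 1 => y) : Matrix (Fin 1) (Fin 1) E) p q : H →L[ℂ] H)) := by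
          intro u
          simpa [Fin.sum_univ_one] using hy (u 0)
        have := hθ 1 (fun _ _ => y) hXpos (fun _ => w)
        simpa [Fin.sum_univ_one] using this
      exact oppos_apply_eq_zero _ hpos v (hv y)
    set g : E →L[ℂ] K := (ContinuousLinearMap.apply ℂ K v).comp θ with hg
    have hgapp : ∀ y : E, g y = θ y v := fun y => rfl
    set W : Submodule ℂ (H →L[ℂ] H) := (LinearMap.ker (g : E →ₗ[ℂ] K)).map E.subtype with hW
    have hWclosed : IsClosed (W : Set (H →L[ℂ] H)) := by
      have hemb : Topology.IsClosedEmbedding (Subtype.val : E → (H →L[ℂ] H)) :=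
        hE.isClosedEmbedding_subtypeVal
      have hker : IsClosed ((LinearMap.ker (g : E →ₗ[ℂ] K) : Submodule ℂ E) : Set E) := by
        have : ((LinearMap.ker (g : E →ₗ[ℂ] K) : Submodule ℂ E) : Set E) = g ⁻¹' {0} := by
          ext y; simp [LinearMap.mem_ker]
        rw [this]
        exact isClosed_singleton.preimage g.continuous
      have himg : (W : Set (H →L[ℂ] H))
          = Subtype.val '' ((LinearMap.ker (g : E →ₗ[ℂ] K) : Submodule ℂ E) : Set E) := by
        rw [hW, Submodule.map_coe]
        rfl
      rw [himg]
      exact hemb.isClosedMap _ hker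
    have hsub : closure (↑(Submodule.span ℂ {x : H →L[ℂ] H | x ∈ E ∧ OpPos x}) :
        Set (H →L[ℂ] H)) ⊆ (W : Set (H →L[ℂ] H)) := by
      apply closure_minimal _ hWclosed
      apply SetLike.coe_subset_coe.mpr
      rw [Submodule.span_le]
      rintro y ⟨hyE, hyP⟩
      exact ⟨⟨y, hyE⟩, by simpa [LinearMap.mem_ker, hgapp] using step1 ⟨y, hyE⟩ hyP, rfl⟩
    have hxW : (x : H →L[ℂ] H) ∈ W := by
      apply hsub
      rw [hgen]
      exact x.2
    obtain ⟨y, hy, hyx⟩ := hxW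
    have hyx' : y = x := Subtype.ext hyx
    rw [← hgapp, ← hyx']
    exact hy
  · -- the boundary property implies approximate generation
    intro hcond
    apply Set.Subset.antisymm
    · apply closure_minimal _ hE
      apply SetLike.coe_subset_coe.mpr
      rw [Submodule.span_le]
      exact fun y hy => hy.1
    · intro x hxE
      by_contra hc
      set Sp := Submodule.span ℂ {x : H →L[ℂ] H | x ∈ E ∧ OpPos x} with hSp
      set F := Sp.topologicalClosure with hF
      haveI hFc : IsClosed (F : Set (H →L[ℂ] H)) := Submodule.isClosed_topologicalClosure _
      have hxF : x ∉ F := by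
        intro h
        apply hc
        have : (F : Set (H →L[ℂ] H)) = closure (Sp : Set (H →L[ℂ] H)) :=
          Submodule.topologicalClosure_coe _
        rw [← this]
        exact h
      let m : (H →L[ℂ] H) →L[ℂ] ((H →L[ℂ] H) ⧸ F) :=
        LinearMap.mkContinuous F.mkQ 1
          (fun y => by simpa [one_mul] using Submodule.Quotient.norm_mk_le F y)
      have hmapp : ∀ y, m y = Submodule.Quotient.mk y := fun y => rfl
      have hm0 : m x ≠ 0 := by
        rw [hmapp]
        intro h
        rw [Submodule.Quotient.mk_eq_zero] at h
        exact hxF h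
      obtain ⟨g, hg1, hgx⟩ := exists_dual_vector ℂ (m x) (norm_ne_zero_iff.mpr hm0)
      set φ : (H →L[ℂ] H) →L[ℂ] ℂ := g.comp m with hφ
      have hφ0 : ∀ y ∈ Sp, φ y = 0 := by
        intro y hy
        have hyF : y ∈ F := Submodule.le_topologicalClosure _ hy
        have : m y = 0 := by
          rw [hmapp, Submodule.Quotient.mk_eq_zero]
          exact hyF
        simp [hφ, ContinuousLinearMap.comp_apply, this]
      have hφx : φ x ≠ 0 := by
        have : φ x = ‖m x‖ := by
          rw [hφ]; simpa using hgx
        rw [this]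
        simpa using norm_ne_zero_iff.mpr hm0
      -- build the counterexample CP map on `ℂ²`
      let A : EuclideanSpace ℂ (Fin 2) →L[ℂ] EuclideanSpace ℂ (Fin 2) :=
        (EuclideanSpace.proj (0 : Fin 2)).smulRight (EuclideanSpace.single (1 : Fin 2) (1 : ℂ))
      let θ : E →L[ℂ] (EuclideanSpace ℂ (Fin 2) →L[ℂ] EuclideanSpace ℂ (Fin 2)) :=
        (φ.comp E.subtypeL).smulRight A
      have hθapp : ∀ y : E, θ y = φ (y : H →L[ℂ] H) • A := fun y => rfl
      have hCP : IsCPMap E θ := by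
        intro d X hX w
        have hzero : ∀ p q, θ (X p q) = 0 := by
          intro p q
          rw [hθapp, hφ0 _ (entry_mem_span E X hX p q)]
          exact zero_smul ℂ A
        simp only [hzero, ContinuousLinearMap.zero_apply, inner_zero_left,
          Finset.sum_const_zero]
        exact le_refl 0
      set v : EuclideanSpace ℂ (Fin 2) := EuclideanSpace.single (0 : Fin 2) (1 : ℂ) with hvdef
      have hAv : A v = EuclideanSpace.single (1 : Fin 2) (1 : ℂ) := by
        simp [A, hvdef, EuclideanSpace.single_apply]
      have horth : ∀ y : E, (inner ℂ (θ y v) v : ℂ) = 0 := by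
        intro y
        rw [hθapp]
        simp only [ContinuousLinearMap.smul_apply, hAv, inner_smul_left,
          EuclideanSpace.inner_single_left, map_one, one_mul]
        rw [hvdef]
        simp [EuclideanSpace.single_apply]
      have hfinal := hcond (EuclideanSpace ℂ (Fin 2)) inferInstance inferInstance inferInstance
        θ hCP v horth ⟨x, hxE⟩
      rw [hθapp] at hfinal
      rw [ContinuousLinearMap.smul_apply, hAv] at hfinal
      rcases smul_eq_zero.mp hfinal with h | h
      · exact hφx h
      · have := congrArg (fun z => z 1) h
        simp [EuclideanSpace.single_apply] at this
end
end

section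
/- Let E be an operator system in B(H), let E* be its continuous dual and E** its bidual, equipped with the weak-* topology (as the dual of E*), and let J : E → E** be the canonical embedding. For f ∈ E* define f† ∈ E* by f†(x) = conj(f(x*)), and call f positive if f† = f and Re f(a) ≥ 0 for all a ∈ E_+. Then the weak-* closure of J(E_+) in E** equals the set of Φ ∈ E** such that Φ(f†) = conj(Φ(f)) for all f ∈ E* and Re Φ(f) ≥ 0 for every positive f ∈ E*. -/
/-!
Statement 3: For an operator system `E ⊆ B(H)`, the weak-* closure of the
canonical image of `E₊` in the bidual `E**` is exactly the set of `Φ ∈ E**`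
which are self-adjoint (`Φ(f†) = conj (Φ f)` for all `f ∈ E*`) and nonnegative
against every positive functional `f ∈ E*`.
-/

open scoped ComplexOrder

noncomputable section

open Set Topology

section helpers

variable {D : Type*} [NormedAddCommGroup D] [NormedSpace ℂ D]

lemma wsmul_apply (c : ℂ) (Φ : WeakDual ℂ D) (f : D) : (c • Φ) f = c • Φ f := rfl

lemma wsmul_real_apply (r : ℝ) (Φ : WeakDual ℂ D) (f : D) : (r • Φ) f = r • Φ f := rfl

lemma wadd_apply (Φ Ψ : WeakDual ℂ D) (f : D) : (Φ + Ψ) f = Φ f + Ψ f := rfl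

lemma weakdual_dual_eval (L : WeakDual ℂ D →L[ℂ] ℂ) :
    ∃ f : D, ∀ Φ : WeakDual ℂ D, L Φ = Φ f := by
  have hb := LinearMap.hasBasis_weakBilin (topDualPairing ℂ D)
  have h1 : L ⁻¹' Metric.ball 0 1 ∈ 𝓝 (0 : WeakDual ℂ D) := by
    have := L.continuous.tendsto 0
    rw [map_zero] at this
    exact this (Metric.ball_mem_nhds 0 one_pos)
  obtain ⟨U, hU, hUsub⟩ := hb.mem_iff.1 h1
  obtain ⟨s, r, hr, rfl⟩ := (SeminormFamily.basisSets_iff _).1 hU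
  set p := (topDualPairing ℂ D).toSeminormFamily with hp
  have hker : ⨅ i : s, LinearMap.ker ((⟨⟨fun Φ : WeakDual ℂ D => Φ (i : D), fun _ _ => rfl⟩, fun _ _ => rfl⟩ :
      WeakDual ℂ D →ₗ[ℂ] ℂ)) ≤
      LinearMap.ker (L : WeakDual ℂ D →ₗ[ℂ] ℂ) := by
    intro (Φ : WeakDual ℂ D) hΦ
    simp only [Submodule.mem_iInf, LinearMap.mem_ker] at hΦ ⊢
    have key : ∀ c : ℂ, ‖c‖ * ‖L Φ‖ < 1 := by
      intro c
      have hmem : (show D →L[ℂ] ℂ from c • Φ) ∈ Seminorm.ball (s.sup p) 0 r := by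
        rw [Seminorm.mem_ball_zero]
        refine Seminorm.finset_sup_apply_lt hr ?_
        intro i hi
        have : Φ i = 0 := hΦ ⟨i, hi⟩
        rw [hp, LinearMap.toSeminormFamily_apply]
        simp only [topDualPairing_apply]
        change ‖c • Φ i‖ < r
        rw [this, smul_zero, norm_zero]
        exact hr
      have := hUsub hmem
      simp only [mem_preimage, Metric.mem_ball, dist_zero_right] at this
      calc ‖c‖ * ‖L Φ‖ = ‖L (c • Φ)‖ := by rw [map_smul, norm_smul]
        _ < 1 := mem_ball_zero_iff.1 this
    by_contra h
    have hpos : 0 < ‖L Φ‖ := by simpa [norm_pos_iff] using h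
    have := key ((2 / ‖L Φ‖ : ℝ) : ℂ)
    rw [Complex.norm_real, Real.norm_eq_abs, abs_of_pos (by positivity),
      div_mul_cancel₀ _ (ne_of_gt hpos)] at this
    linarith
  have hspan := mem_span_of_iInf_ker_le_ker (𝕜 := ℂ) hker
  obtain ⟨c, hc⟩ := (Submodule.mem_span_range_iff_exists_fun ℂ).1 hspan
  refine ⟨∑ i : s, c i • (i : D), fun Φ => ?_⟩
  have h2 := congrArg (fun (K : WeakDual ℂ D →ₗ[ℂ] ℂ) => K Φ) hc
  simp only [LinearMap.coe_sum, Finset.sum_apply, LinearMap.smul_apply, LinearMap.coe_mk, AddHom.coe_mk,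
    LinearMap.flip_apply, topDualPairing_apply, smul_eq_mul] at h2
  have h3 : Φ (∑ i : s, c i • (i : D)) = ∑ i : s, c i * Φ i := by
    rw [map_sum]; exact Finset.sum_congr rfl fun i _ => by rw [map_smul, smul_eq_mul]
  rw [h3, show L Φ = (L : WeakDual ℂ D →ₗ[ℂ] ℂ) Φ from rfl, ← h2]
  exact Finset.sum_congr rfl fun i _ => rfl

end helpers

section ops

variable {H : Type} [NormedAddCommGroup H] [InnerProductSpace ℂ H]

lemma OpPos.star_eq [CompleteSpace H] {T : H →L[ℂ] H} (h : OpPos T) : star T = T := by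
  have hsym : (T : H →ₗ[ℂ] H).IsSymmetric := by
    rw [LinearMap.isSymmetric_iff_inner_map_self_real]
    intro v
    have h0 := h v
    have him : (inner ℂ (T v) v : ℂ).im = 0 := by
      rw [Complex.le_def] at h0
      simpa using h0.2.symm
    exact Complex.conj_eq_iff_im.2 him
  exact ContinuousLinearMap.isSelfAdjoint_iff_isSymmetric.2 hsym

lemma OpPos.zero : OpPos (0 : H →L[ℂ] H) := by
  intro v
  simp

lemma OpPos.add {T S : H →L[ℂ] H} (hT : OpPos T) (hS : OpPos S) : OpPos (T + S) := by
  intro v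
  rw [ContinuousLinearMap.add_apply, inner_add_left]
  exact add_nonneg (hT v) (hS v)

lemma OpPos.smul_real {T : H →L[ℂ] H} (hT : OpPos T) {r : ℝ} (hr : 0 ≤ r) :
    OpPos ((r : ℂ) • T) := by
  intro v
  rw [ContinuousLinearMap.smul_apply, inner_smul_left]
  have : (starRingEnd ℂ) (r : ℂ) = (r : ℂ) := Complex.conj_ofReal r
  rw [this]
  exact mul_nonneg (by exact_mod_cast Complex.zero_le_real.2 hr) (hT v)

end ops

set_option maxHeartbeats 1000000 in
theorem stmt3 {H : Type} [NormedAddCommGroup H] [InnerProductSpace ℂ H]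
    [CompleteSpace H]
    (E : Submodule ℂ (H →L[ℂ] H)) (hE : IsClosed (E : Set (H →L[ℂ] H)))
    (hstar : ∀ x ∈ E, star x ∈ E)
    -- the involution `f ↦ f†` on the dual space `E*`, `f†(x) = conj (f (x*))`
    (dag : StrongDual ℂ E → StrongDual ℂ E)
    (hdag : ∀ (f : StrongDual ℂ E) (x : H →L[ℂ] H) (hx : x ∈ E),
      dag f ⟨x, hx⟩ = (starRingEnd ℂ) (f ⟨star x, hstar x hx⟩))
    -- the canonical embedding of `E` into its bidual, with the weak-* topology
    (J : E → WeakDual ℂ (StrongDual ℂ E))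
    (hJ : ∀ (x : E) (f : StrongDual ℂ E), J x f = f x) :
    closure (J '' {x : E | OpPos (x : H →L[ℂ] H)}) =
      {Φ : WeakDual ℂ (StrongDual ℂ E) |
        (∀ f : StrongDual ℂ E, Φ (dag f) = (starRingEnd ℂ) (Φ f)) ∧
        (∀ f : StrongDual ℂ E,
          dag f = f → (∀ x : E, OpPos (x : H →L[ℂ] H) → 0 ≤ (f x).re) →
            0 ≤ (Φ f).re)} := by
  -- star fixes positive elements of E (as subtype elements)
  have hstar_mem : ∀ x : E, OpPos (x : H →L[ℂ] H) →
      (⟨star (x : H →L[ℂ] H), hstar x x.2⟩ : E) = x := by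
    intro x hx
    exact Subtype.ext (OpPos.star_eq hx)
  -- dag applied at positive elements
  have hdag_pos : ∀ (f : (StrongDual ℂ E)) (x : E), OpPos (x : H →L[ℂ] H) →
      dag f x = (starRingEnd ℂ) (f x) := by
    intro f x hx
    have := hdag f x x.2
    rwa [hstar_mem x hx] at this
  apply subset_antisymm
  · -- forward inclusion: closure of J '' P ⊆ RHS
    apply closure_minimal
    · rintro _ ⟨x, hx, rfl⟩
      constructor
      · intro f
        rw [hJ, hJ, hdag_pos f x hx]
      · intro f _ hf
        rw [hJ]
        exact hf x hx
    · -- RHS is closed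
      have hA : IsClosed {Φ : WeakDual ℂ (StrongDual ℂ E) |
          ∀ f : (StrongDual ℂ E), Φ (dag f) = (starRingEnd ℂ) (Φ f)} := by
        rw [show {Φ : WeakDual ℂ (StrongDual ℂ E) | ∀ f : (StrongDual ℂ E), Φ (dag f) = (starRingEnd ℂ) (Φ f)} =
            ⋂ f : (StrongDual ℂ E), {Φ : WeakDual ℂ (StrongDual ℂ E) | Φ (dag f) = (starRingEnd ℂ) (Φ f)} by
          ext Φ; exact ⟨fun h => Set.mem_iInter.2 fun f => h f,
            fun h f => Set.mem_iInter.1 h f⟩]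
        refine isClosed_iInter fun f => isClosed_eq (WeakDual.eval_continuous (dag f)) ?_
        exact continuous_star.comp (WeakDual.eval_continuous f)
      have hB : IsClosed {Φ : WeakDual ℂ (StrongDual ℂ E) | ∀ f : (StrongDual ℂ E),
          dag f = f → (∀ x : E, OpPos (x : H →L[ℂ] H) → 0 ≤ (f x).re) →
            0 ≤ (Φ f).re} := by
        rw [show {Φ : WeakDual ℂ (StrongDual ℂ E) | ∀ f : (StrongDual ℂ E),
            dag f = f → (∀ x : E, OpPos (x : H →L[ℂ] H) → 0 ≤ (f x).re) →
              0 ≤ (Φ f).re} =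
            ⋂ f : (StrongDual ℂ E), {Φ : WeakDual ℂ (StrongDual ℂ E) |
              dag f = f → (∀ x : E, OpPos (x : H →L[ℂ] H) → 0 ≤ (f x).re) →
                0 ≤ (Φ f).re} by
              ext Φ; exact ⟨fun h => Set.mem_iInter.2 fun f => h f,
                fun h f => Set.mem_iInter.1 h f⟩]
        refine isClosed_iInter fun f => ?_
        by_cases h1 : dag f = f
        · by_cases h2 : ∀ x : E, OpPos (x : H →L[ℂ] H) → 0 ≤ (f x).re
          · have heq : {Φ : WeakDual ℂ (StrongDual ℂ E) |
                dag f = f → (∀ x : E, OpPos (x : H →L[ℂ] H) → 0 ≤ (f x).re) →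
                  0 ≤ (Φ f).re} = (fun Φ : WeakDual ℂ (StrongDual ℂ E) => (Φ f).re) ⁻¹' Ici 0 := by
              ext Φ; exact ⟨fun h => h h1 h2, fun h _ _ => h⟩
            rw [heq]
            exact IsClosed.preimage
              (Complex.continuous_re.comp (WeakDual.eval_continuous f)) isClosed_Ici
          · have heq : {Φ : WeakDual ℂ (StrongDual ℂ E) |
                dag f = f → (∀ x : E, OpPos (x : H →L[ℂ] H) → 0 ≤ (f x).re) →
                  0 ≤ (Φ f).re} = univ := by
              ext Φ; exact ⟨fun _ => trivial, fun _ hd hp => absurd hp h2⟩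
            rw [heq]; exact isClosed_univ
        · have heq : {Φ : WeakDual ℂ (StrongDual ℂ E) |
              dag f = f → (∀ x : E, OpPos (x : H →L[ℂ] H) → 0 ≤ (f x).re) →
                0 ≤ (Φ f).re} = univ := by
            ext Φ; exact ⟨fun _ => trivial, fun _ hd => absurd hd h1⟩
          rw [heq]; exact isClosed_univ
      exact hA.inter hB
  · -- reverse inclusion
    intro Φ hΦ
    obtain ⟨hΦ1, hΦ2⟩ := hΦ
    by_contra hΦC
    -- J '' P is convex
    have hJadd : ∀ (x y : E) (a b : ℝ),
        a • J x + b • J y = J ((a : ℂ) • x + (b : ℂ) • y) := by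
      intro x y a b
      apply DFunLike.ext
      intro f
      have h1 : (a • J x + b • J y) f = a • (J x) f + b • (J y) f := rfl
      rw [h1, hJ, hJ, hJ, map_add, map_smul, map_smul]
      simp [Complex.real_smul]
    have hPconv : Convex ℝ (J '' {x : E | OpPos (x : H →L[ℂ] H)}) := by
      rintro _ ⟨x, hx, rfl⟩ _ ⟨y, hy, rfl⟩ a b ha hb hab
      refine ⟨(a : ℂ) • x + (b : ℂ) • y, ?_, (hJadd x y a b).symm⟩
      have : (((a : ℂ) • x + (b : ℂ) • y : E) : H →L[ℂ] H)
          = (a : ℂ) • (x : H →L[ℂ] H) + (b : ℂ) • (y : H →L[ℂ] H) := by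
        simp
      simp only [mem_setOf_eq, this]
      exact OpPos.add (OpPos.smul_real hx ha) (OpPos.smul_real hy hb)
    letI : NormedAddCommGroup E := inferInstance
    letI : NormedSpace ℂ E := inferInstance
    letI : IsScalarTower ℝ ℂ (WeakDual ℂ (StrongDual ℂ E)) :=
      inferInstanceAs (IsScalarTower ℝ ℂ (StrongDual ℂ E →L[ℂ] ℂ))
    letI : LocallyConvexSpace ℝ (WeakDual ℂ (StrongDual ℂ E)) :=
      by exact WeakBilin.locallyConvexSpace (E := StrongDual ℂ E →L[ℂ] ℂ) (F := StrongDual ℂ E) (B := topDualPairing ℂ (StrongDual ℂ E))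
    obtain ⟨g', u, hlt, hgt⟩ :=
      RCLike.geometric_hahn_banach_closed_point (𝕜 := ℂ)
        (hPconv.closure) isClosed_closure hΦC
    obtain ⟨g, hg⟩ := weakdual_dual_eval (D := StrongDual ℂ E) g'
    -- u is positive since 0 ∈ J '' P
    have h0P : OpPos ((0 : E) : H →L[ℂ] H) := by
      intro v
      simp
    have hu : 0 < u := by
      have := hlt (J 0) (subset_closure ⟨0, h0P, rfl⟩)
      rw [hg, hJ] at this
      simpa using this
    -- Re (g x) ≤ 0 for x positive
    have hgneg : ∀ x : E, OpPos (x : H →L[ℂ] H) → (g x).re ≤ 0 := by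
      intro x hx
      by_contra h
      push_neg at h
      have ht : ∀ t : ℝ, 0 ≤ t → t * (g x).re < u := by
        intro t htt
        have hmem : OpPos ((((t : ℂ) • x) : E) : H →L[ℂ] H) := OpPos.smul_real hx htt
        have := hlt (J ((t : ℂ) • x)) (subset_closure ⟨_, hmem, rfl⟩)
        rw [hg, hJ, map_smul] at this
        simpa [Complex.smul_re] using this
      have := ht (u / (g x).re) (le_of_lt (div_pos hu h))
      rw [div_mul_cancel₀ _ (ne_of_gt h)] at this
      exact lt_irrefl u this
    -- the positive functional f0 = -(g + dag g)
    set f0 : (StrongDual ℂ E) := -(g + dag g) with hf0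
    have hdagdag : ∀ x : E, dag g ⟨star (x : H →L[ℂ] H), hstar x x.2⟩
        = (starRingEnd ℂ) (g x) := by
      intro x
      have := hdag g (star (x : H →L[ℂ] H)) (hstar x x.2)
      rw [this]
      congr 1
      congr 1
      exact Subtype.ext (star_star _)
    have hf0dag : dag f0 = f0 := by
      apply ContinuousLinearMap.ext
      rintro ⟨x, hx⟩
      rw [hdag f0 x hx, hf0]
      simp only [ContinuousLinearMap.neg_apply, ContinuousLinearMap.add_apply, map_neg, map_add]
      rw [hdagdag ⟨x, hx⟩, hdag g x hx]
      rw [Complex.conj_conj]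
      ring
    have hf0pos : ∀ x : E, OpPos (x : H →L[ℂ] H) → 0 ≤ (f0 x).re := by
      intro x hx
      have hsa := hstar_mem x hx
      have hdg : dag g x = (starRingEnd ℂ) (g x) := hdag_pos g x hx
      rw [hf0]
      simp only [ContinuousLinearMap.neg_apply, ContinuousLinearMap.add_apply, hdg]
      rw [Complex.neg_re, Complex.add_re, Complex.conj_re]
      have := hgneg x hx
      linarith
    have hpos := hΦ2 f0 hf0dag hf0pos
    -- but Re (Φ f0) = -2 Re (Φ g) < 0
    have hΦg : u < (Φ g).re := by
      have := hgt
      rw [hg] at this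
      simpa using this
    have : (Φ f0).re = -((Φ g).re + (Φ g).re) := by
      rw [hf0, map_neg, map_add, hΦ1 g]
      rw [Complex.neg_re, Complex.add_re, Complex.conj_re]
    rw [this] at hpos
    linarith
end
end

section
/- Let E ⊆ B(H₀) be a unital operator system (a norm-closed self-adjoint subspace containing the identity operator), let φ : E → ℂ be a state (a continuous linear functional with φ(1) = 1 and φ(a) ≥ 0 for all a ∈ E_+), and let F = ker φ. If F is approximately generated by positives (the norm closure of Span_ℂ(F_+) equals F), then φ is maximal in the dilation order: for every complex Hilbert space K, every continuous completely positive linear map ψ : E → B(K) with ψ(1) = 1, and every unit vector v ∈ K such that ⟨ψ(x)v, v⟩ = φ(x) for all x ∈ E, one has ψ(x)v = φ(x)·v for all x ∈ E. -/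
/-!
Statement 7: Let `E ⊆ B(H)` be a unital operator system, `φ` a state on `E`
with kernel `F`. If `F` is approximately generated by positives, then `φ` is
maximal in the dilation order: any unital completely positive dilation
`ψ : E → B(K)` of `φ` at a unit vector `v` satisfies `ψ(x)v = φ(x)·v`.
-/

open scoped ComplexOrder

noncomputable section

lemma pos_apply_eq_zero {K : Type} [NormedAddCommGroup K] [InnerProductSpace ℂ K]
    [CompleteSpace K] (T : K →L[ℂ] K) (hpos : ∀ u : K, 0 ≤ (inner ℂ (T u) u : ℂ))
    (v : K) (hv : (inner ℂ (T v) v : ℂ) = 0) : T v = 0 := by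
  have hTpos : T.IsPositive := by
    rw [ContinuousLinearMap.isPositive_iff_complex]
    intro x
    obtain ⟨h1, h2⟩ := Complex.nonneg_iff.mp (hpos x)
    constructor
    · simp only [RCLike.re_to_complex]
      exact Complex.ext (by simp) (by simpa using h2)
    · simpa using h1
  have hsym := ContinuousLinearMap.isSelfAdjoint_iff_isSymmetric.mp hTpos.isSelfAdjoint
  set w := T v with hw
  set C : ℝ := (inner ℂ (T w) w : ℂ).re with hC
  have hC0 : 0 ≤ C := (Complex.nonneg_iff.mp (hpos w)).1
  have key : ∀ t : ℝ, 0 ≤ C * (t * t) + (2 * ‖w‖ ^ 2) * t + 0 := by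
    intro t
    have h := hpos (v + (t : ℂ) • w)
    have hexp : (inner ℂ (T (v + (t : ℂ) • w)) (v + (t : ℂ) • w) : ℂ)
        = (inner ℂ (T v) v : ℂ) + (t : ℂ) * (inner ℂ (T v) w : ℂ)
          + (t : ℂ) * (inner ℂ (T w) v : ℂ) + (t : ℂ) * (t : ℂ) * (inner ℂ (T w) w : ℂ) := by
      simp only [map_add, map_smul, inner_add_left, inner_add_right, inner_smul_left,
        inner_smul_right, Complex.conj_ofReal]
      ring
    have h1 : (inner ℂ (T v) w : ℂ) = (‖w‖ : ℂ) ^ 2 := by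
      rw [← hw]; exact inner_self_eq_norm_sq_to_K w
    have h2 : (inner ℂ (T w) v : ℂ) = (‖w‖ : ℂ) ^ 2 := by
      have hs := hsym w v
      simp only [ContinuousLinearMap.coe_coe] at hs
      rw [hs, ← hw]; exact inner_self_eq_norm_sq_to_K w
    have hcre : (inner ℂ (T w) w : ℂ) = (C : ℂ) := by
      obtain ⟨h1', h2'⟩ := Complex.nonneg_iff.mp (hpos w)
      exact Complex.ext (by simp [hC]) (by simp [← h2'])
    rw [hexp, hv, h1, h2, hcre] at h
    norm_cast at h
    nlinarith [h]
  have hd := discrim_le_zero key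
  have : discrim C (2 * ‖w‖ ^ 2) 0 = 4 * (‖w‖ ^ 2) ^ 2 := by
    simp [discrim]; ring
  rw [this] at hd
  have : ‖w‖ ^ 2 = 0 := by nlinarith [sq_nonneg (‖w‖ ^ 2)]
  have hw0 : ‖w‖ = 0 := by nlinarith [norm_nonneg w]
  exact norm_eq_zero.mp hw0

theorem stmt7 {H : Type} [NormedAddCommGroup H] [InnerProductSpace ℂ H]
    [CompleteSpace H]
    (E : Submodule ℂ (H →L[ℂ] H)) (hE : IsClosed (E : Set (H →L[ℂ] H)))
    (hstar : ∀ x ∈ E, star x ∈ E) (hone : (1 : H →L[ℂ] H) ∈ E)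
    -- `φ` is a state on `E`
    (φ : E →L[ℂ] ℂ) (hφ1 : φ ⟨1, hone⟩ = 1)
    (hφpos : ∀ x : E, OpPos (x : H →L[ℂ] H) → 0 ≤ φ x)
    -- the kernel `F = ker φ` is approximately generated by positives
    (hF : closure (↑(Submodule.span ℂ {x : E | φ x = 0 ∧ OpPos (x : H →L[ℂ] H)}) :
        Set E) = {x : E | φ x = 0}) :
    ∀ (K : Type) (_ : NormedAddCommGroup K) (_ : InnerProductSpace ℂ K)
      (_ : CompleteSpace K) (ψ : E →L[ℂ] (K →L[ℂ] K)), IsCPMap E ψ →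
      ψ ⟨1, hone⟩ = 1 →
      ∀ v : K, ‖v‖ = 1 → (∀ x : E, (inner ℂ v (ψ x v) : ℂ) = φ x) →
        ∀ x : E, ψ x v = φ x • v := by
  intro K _ _ _ ψ hcp hψ1 v hv hdil x
  -- ψ maps positives to positives (d = 1 case of complete positivity)
  have hψpos : ∀ y : E, OpPos (y : H →L[ℂ] H) → OpPos (ψ y) := by
    intro y hy
    have h := hcp 1 (fun _ _ => y) (by
      intro u
      simpa using hy (u 0))
    intro u
    simpa using h (fun _ => u)
  -- the continuous linear map x ↦ ψ x v - φ x • v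
  set Θ : E →L[ℂ] K :=
    (ContinuousLinearMap.apply ℂ K v).comp ψ - φ.smulRight v with hΘ
  have hΘapp : ∀ y : E, Θ y = ψ y v - φ y • v := by
    intro y; simp [hΘ]
  -- Θ vanishes on the positive part of the kernel
  have hS : ∀ y ∈ {x : E | φ x = 0 ∧ OpPos (x : H →L[ℂ] H)}, Θ y = 0 := by
    rintro y ⟨hy0, hypos⟩
    have hin : (inner ℂ ((ψ y) v) v : ℂ) = 0 := by
      rw [← inner_conj_symm, hdil y, hy0, map_zero]
    have := pos_apply_eq_zero (ψ y) (hψpos y hypos) v hin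
    rw [hΘapp, this, hy0, zero_smul, sub_zero]
  -- hence on the span, hence on its closure = ker φ
  have hker : ∀ y : E, φ y = 0 → Θ y = 0 := by
    have hspan : (Submodule.span ℂ {x : E | φ x = 0 ∧ OpPos (x : H →L[ℂ] H)} : Set E)
        ⊆ Θ ⁻¹' {0} := by
      intro y hy
      induction hy using Submodule.span_induction with
      | mem z hz => exact hS z hz
      | zero => simp
      | add a b _ _ ha hb =>
        simp only [Set.mem_preimage, Set.mem_singleton_iff, map_add] at ha hb ⊢
        rw [ha, hb, add_zero]
      | smul c a _ ha =>
        simp only [Set.mem_preimage, Set.mem_singleton_iff, map_smul] at ha ⊢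
        rw [ha, smul_zero]
    intro y hy
    have hc : closure (↑(Submodule.span ℂ {x : E | φ x = 0 ∧ OpPos (x : H →L[ℂ] H)}) :
        Set E) ⊆ Θ ⁻¹' {0} :=
      closure_minimal hspan (IsClosed.preimage Θ.continuous isClosed_singleton)
    have : y ∈ closure (↑(Submodule.span ℂ {x : E | φ x = 0 ∧ OpPos (x : H →L[ℂ] H)}) :
        Set E) := by rw [hF]; exact hy
    exact hc this
  -- conclude for general x
  have hΘ1 : Θ ⟨1, hone⟩ = 0 := by
    rw [hΘapp, hψ1, hφ1, one_smul]
    simp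
  have hy0 : φ (x - φ x • ⟨1, hone⟩) = 0 := by
    rw [map_sub, map_smul, hφ1, smul_eq_mul, mul_one, sub_self]
  have h2 := hker _ hy0
  rw [map_sub, map_smul, hΘ1, smul_zero, sub_zero] at h2
  have h3 := hΘapp x
  rw [h2] at h3
  exact sub_eq_zero.mp h3.symm
end
end

section
/- Let A be a unital C*-algebra and let E ⊆ A be a norm-closed subspace with 1 ∈ A contained in E and x* ∈ E whenever x ∈ E. Let C₀(ℕ, E) = {f ∈ C₀(ℕ, A) : f(n) ∈ E for all n}. Then every continuous linear functional φ : C₀(ℕ, E) → ℂ with ‖φ‖ ≤ 1 which is positive (φ(f) is a nonnegative real whenever f ∈ C₀(ℕ, E) is a positive element of C₀(ℕ, A)) extends to a positive continuous linear functional ψ : C₀(ℕ, A) → ℂ with ‖ψ‖ ≤ 1. -/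
/-!
Statement 10: Let `A` be a unital C*-algebra, `E ⊆ A` a closed unital
self-adjoint subspace, and `C₀(ℕ, E)` the subspace of `C₀(ℕ, A)` of functions
with values in `E`. Then every quasistate on `C₀(ℕ, E)` (positive functional of
norm at most one, encoded by `‖φ f‖ ≤ ‖f‖` for all `f`) extends to a quasistate
on `C₀(ℕ, A)`.
-/

open scoped ZeroAtInfty ComplexOrder

noncomputable section

variable (A : Type) [CStarAlgebra A]

/-- The subspace `C₀(ℕ, E)` of `C₀(ℕ, A)` of functions taking values in a
subspace `E ⊆ A`. -/
def C0E (E : Submodule ℂ A) : Submodule ℂ C₀(ℕ, A) where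
  carrier := {f | ∀ n, f n ∈ E}
  add_mem' := fun hf hg n => by
    simpa using E.add_mem (hf n) (hg n)
  zero_mem' := fun n => by simp
  smul_mem' := fun c f hf => fun n => by
    simpa using E.smul_mem c (hf n)

def sglA (n : ℕ) : A →ₗ[ℂ] C₀(ℕ, A) where
  toFun a :=
    { toFun := fun m => if m = n then a else 0
      continuous_toFun := continuous_of_discreteTopology
      zero_at_infty' := by
        rw [cocompact_eq_atTop]
        refine tendsto_const_nhds.congr' ?_
        filter_upwards [Filter.eventually_gt_atTop n] with m hm
        simp [Nat.ne_of_gt hm |>.symm, hm.ne'] }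
  map_add' a b := by ext m; by_cases h : m = n <;> simp [h]
  map_smul' c a := by ext m; by_cases h : m = n <;> simp [h]

@[simp] lemma sglA_apply (n : ℕ) (a : A) (m : ℕ) :
    sglA A n a m = if m = n then a else 0 := rfl

lemma norm_sglA_le (n : ℕ) (a : A) : ‖sglA A n a‖ ≤ ‖a‖ := by
  rw [← ZeroAtInftyContinuousMap.norm_toBCF_eq_norm]
  refine BoundedContinuousFunction.norm_le (norm_nonneg a) |>.mpr fun m => ?_
  simp only [ZeroAtInftyContinuousMap.toBCF_apply]
  rw [sglA_apply]
  split <;> simp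

lemma sum_C0_apply {ι : Type*} (s : Finset ι) (g : ι → C₀(ℕ, A)) (m : ℕ) :
    (∑ i ∈ s, g i) m = ∑ i ∈ s, g i m := by
  classical
  induction s using Finset.induction with
  | empty => simp
  | insert h ih => simp_all

/-- A functional on a unital C*-algebra whose norm is at most its (real, nonnegative)
value at `1` is positive. -/
lemma pos_of_norm_le_apply_one [PartialOrder A] [StarOrderedRing A]
    (ψ : A →L[ℂ] ℂ) (t : ℝ) (ht : 0 ≤ t) (h1 : ψ 1 = (t : ℂ))
    (hn : ‖ψ‖ ≤ t) (a : A) (ha : 0 ≤ a) : 0 ≤ ψ a := by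
  rcases subsingleton_or_nontrivial A with hS | hS
  · rw [Subsingleton.elim a 0, map_zero]
  rcases eq_or_lt_of_le ht with ht0 | htpos
  · have : ‖ψ a‖ ≤ 0 := by
      calc ‖ψ a‖ ≤ ‖ψ‖ * ‖a‖ := ψ.le_opNorm a
      _ ≤ 0 := by
        rw [← ht0] at hn
        exact mul_nonpos_of_nonpos_of_nonneg hn (norm_nonneg a)
    rw [norm_le_zero_iff.mp this]
  have hsa : IsSelfAdjoint a := .of_nonneg ha
  set s : ℝ := ‖a‖ with hs
  have hsnn : 0 ≤ s := norm_nonneg a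
  -- Step 1: the imaginary part vanishes
  have him : (ψ a).im = 0 := by
    by_contra hβ
    set β : ℝ := (ψ a).im with hβdef
    -- for every real x, a quadratic inequality
    have hkey : ∀ x : ℝ, β ^ 2 + 2 * β * t * x ≤ t ^ 2 * s ^ 2 := by
      intro x
      set u : A := a + ((x : ℂ) * Complex.I) • 1 with hu
      have hstaru : star u = a - ((x : ℂ) * Complex.I) • 1 := by
        simp [hu, star_smul, hsa.star_eq, sub_eq_add_neg, ← neg_smul]
      have hz : ((x : ℂ) * Complex.I) * ((x : ℂ) * Complex.I) = -((x ^ 2 : ℝ) : ℂ) := by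
        push_cast
        ring_nf
        rw [Complex.I_sq]
        ring
      have hmul : star u * u = a * a + ((x ^ 2 : ℝ) : ℂ) • 1 := by
        rw [hstaru, hu]
        simp only [sub_eq_add_neg, add_mul, mul_add, smul_add, neg_smul, mul_smul_comm,
          smul_mul_assoc, mul_one, one_mul, smul_smul, smul_neg, neg_neg, hz]
        rw [neg_mul, smul_mul_assoc, one_mul]
        abel
      have hnormu : ‖u‖ ^ 2 ≤ s ^ 2 + x ^ 2 := by
        have h1' : ‖u‖ ^ 2 = ‖star u * u‖ := by
          rw [CStarRing.norm_star_mul_self, sq]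
        rw [h1', hmul]
        calc ‖a * a + ((x ^ 2 : ℝ) : ℂ) • 1‖ ≤ ‖a * a‖ + ‖((x ^ 2 : ℝ) : ℂ) • (1 : A)‖ :=
              norm_add_le _ _
          _ ≤ s ^ 2 + x ^ 2 := by
            rw [norm_smul, norm_one, mul_one]
            gcongr
            · calc ‖a * a‖ ≤ ‖a‖ * ‖a‖ := norm_mul_le a a
                _ = s ^ 2 := by rw [sq]
            · simp [abs_of_nonneg (sq_nonneg x), le_refl]
      have hψu : ψ u = ψ a + (x : ℂ) * Complex.I * (t : ℂ) := by
        rw [hu, map_add, map_smul, h1, smul_eq_mul]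
      have hb : ‖ψ u‖ ^ 2 ≤ t ^ 2 * (s ^ 2 + x ^ 2) := by
        calc ‖ψ u‖ ^ 2 ≤ (‖ψ‖ * ‖u‖) ^ 2 := by
              gcongr
              exact ψ.le_opNorm u
          _ ≤ (t * ‖u‖) ^ 2 := by gcongr
          _ = t ^ 2 * ‖u‖ ^ 2 := by ring
          _ ≤ t ^ 2 * (s ^ 2 + x ^ 2) := by gcongr
      have hre : (ψ u).re = (ψ a).re := by simp [hψu]
      have him' : (ψ u).im = β + x * t := by simp [hψu, hβdef]
      have hnorm2 : ‖ψ u‖ ^ 2 = (ψ u).re ^ 2 + (ψ u).im ^ 2 := by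
        rw [Complex.sq_norm, Complex.normSq_apply]
        ring
      have hfin : (ψ a).re ^ 2 + (β + x * t) ^ 2 ≤ t ^ 2 * (s ^ 2 + x ^ 2) := by
        rw [← hre, ← him', ← hnorm2]
        exact hb
      nlinarith [sq_nonneg ((ψ a).re)]
    -- choose x to derive a contradiction
    have hx := hkey ((t * s ^ 2) / β)
    have h2 : 2 * β * t * ((t * s ^ 2) / β) = 2 * t ^ 2 * s ^ 2 := by
      field_simp
    rw [h2] at hx
    have hb2 : 0 < β ^ 2 := by positivity
    nlinarith [mul_nonneg (sq_nonneg t) (sq_nonneg s)]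
  -- Step 2: the real part is nonnegative
  have hre : 0 ≤ (ψ a).re := by
    set w : A := (s : ℂ) • 1 - a with hw
    have hw0 : 0 ≤ w := by
      rw [hw, sub_nonneg]
      have := hsa.le_algebraMap_norm_self
      rwa [Algebra.algebraMap_eq_smul_one, ← Complex.coe_smul] at this
    have hwle : w ≤ (s : ℂ) • 1 := by
      rw [hw]
      calc (s : ℂ) • 1 - a ≤ (s : ℂ) • 1 - 0 := by gcongr
        _ = (s : ℂ) • 1 := by rw [sub_zero]
    have hnw : ‖w‖ ≤ s := by
      calc ‖w‖ ≤ ‖(s : ℂ) • (1 : A)‖ := CStarAlgebra.norm_le_norm_of_nonneg_of_le hw0 hwle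
        _ = s := by simp [norm_smul, hsnn, abs_of_nonneg]
    have hψw : ψ w = ((s * t - (ψ a).re : ℝ) : ℂ) := by
      rw [hw, map_sub, map_smul, h1, smul_eq_mul]
      apply Complex.ext <;> simp [him]
    have : ‖ψ w‖ ≤ t * s := by
      calc ‖ψ w‖ ≤ ‖ψ‖ * ‖w‖ := ψ.le_opNorm w
        _ ≤ t * s := by gcongr
    rw [hψw, Complex.norm_real, Real.norm_eq_abs] at this
    have := abs_le.mp this |>.2
    linarith
  rw [Complex.le_def]
  exact ⟨by simpa using hre, by simp [him]⟩


set_option maxHeartbeats 1600000 in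
theorem stmt10 [PartialOrder A] [StarOrderedRing A]
    (E : Submodule ℂ A) (hE : IsClosed (E : Set A))
    (hone : (1 : A) ∈ E) (hstar : ∀ x ∈ E, star x ∈ E)
    (φ : C0E A E →ₗ[ℂ] ℂ)
    (hφnorm : ∀ f : C0E A E, ‖φ f‖ ≤ ‖(f : C₀(ℕ, A))‖)
    (hφpos : ∀ f : C0E A E, (∀ n, 0 ≤ (f : C₀(ℕ, A)) n) → 0 ≤ φ f) :
    ∃ Ψ : C₀(ℕ, A) →L[ℂ] ℂ, ‖Ψ‖ ≤ 1 ∧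
      (∀ f : C₀(ℕ, A), (∀ n, 0 ≤ f n) → 0 ≤ Ψ f) ∧
      (∀ f : C0E A E, Ψ (f : C₀(ℕ, A)) = φ f) := by
  classical
  rcases subsingleton_or_nontrivial A with hS | hS
  · refine ⟨0, by rw [ContinuousLinearMap.opNorm_zero]; exact zero_le_one, fun f _ => by simp, fun f => ?_⟩
    have hf0 : f = 0 := Subtype.ext (ZeroAtInftyContinuousMap.ext fun m => Subsingleton.elim _ _)
    simp [hf0]
  -- membership of the single functions
  have hmem : ∀ (n : ℕ) (a : A), a ∈ E → (sglA A n a) ∈ C0E A E := by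
    intro n a ha m
    rw [sglA_apply]
    split
    exacts [ha, E.zero_mem]
  set Φ : ℕ → (E →ₗ[ℂ] ℂ) := fun n =>
    φ ∘ₗ LinearMap.codRestrict (C0E A E) ((sglA A n).comp E.subtype)
      (fun a => hmem n a a.2) with hΦdef
  have hΦ_apply : ∀ (n : ℕ) (a : E), Φ n a = φ ⟨sglA A n a, hmem n a a.2⟩ := fun n a => rfl
  set en : ℕ → C0E A E := fun n => ⟨sglA A n 1, hmem n 1 hone⟩ with hendef
  have hsgl_pos : ∀ (n : ℕ) (a : A), 0 ≤ a → ∀ m, 0 ≤ (sglA A n a) m := by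
    intro n a ha m
    rw [sglA_apply]
    split
    exacts [ha, le_refl 0]
  have honeA : (0 : A) ≤ 1 := by simpa using star_mul_self_nonneg (1 : A)
  have hen_pos : ∀ n, 0 ≤ φ (en n) := fun n => hφpos _ (hsgl_pos n 1 honeA)
  set r : ℕ → ℝ := fun n => (φ (en n)).re with hrdef
  have hr_nonneg : ∀ n, 0 ≤ r n := fun n => (Complex.le_def.mp (hen_pos n)).1
  have hφen : ∀ n, φ (en n) = ((r n : ℝ) : ℂ) := by
    intro n
    apply Complex.ext
    · rfl
    · simpa using (Complex.le_def.mp (hen_pos n)).2.symm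
  -- positivity gives the bound on self-adjoint elements of E
  have key_sa : ∀ (n : ℕ) (h : E), IsSelfAdjoint (h : A) →
      Φ n h = (((Φ n h).re : ℝ) : ℂ) ∧ |(Φ n h).re| ≤ r n * ‖(h : A)‖ := by
    intro n h hsa
    set c : ℝ := ‖(h : A)‖ with hc
    have halg : algebraMap ℝ A c = ((c : ℂ)) • (1 : A) := by
      rw [Algebra.algebraMap_eq_smul_one, ← Complex.coe_smul]
    have h1 : (0 : A) ≤ (c : ℂ) • 1 - h := by
      rw [sub_nonneg, ← halg]
      exact hsa.le_algebraMap_norm_self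
    have h2 : (0 : A) ≤ (c : ℂ) • 1 + h := by
      rw [← sub_neg_eq_add, sub_nonneg, ← halg]
      have := hsa.neg_algebraMap_norm_le_self
      exact neg_le.mp (by simpa using this)
    -- the two elements of C0E
    have e1 : ((c : ℂ) • (⟨1, hone⟩ : E) - h : E) = (⟨(c : ℂ) • (1:A) - h,
        E.sub_mem (E.smul_mem _ hone) h.2⟩ : E) := rfl
    have heq1 : (⟨sglA A n ((c : ℂ) • (1:A) - (h : A)),
        hmem n _ (E.sub_mem (E.smul_mem _ hone) h.2)⟩ : C0E A E)
        = (c : ℂ) • en n + (-1 : ℂ) • ⟨sglA A n h, hmem n h h.2⟩ := by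
      apply Subtype.ext
      simp only [Submodule.coe_add, SetLike.val_smul, hendef]
      rw [map_sub, map_smul]
      module
    have hu : 0 ≤ (c : ℂ) * ((r n : ℝ) : ℂ) + (-1 : ℂ) * Φ n h := by
      have h0 := hφpos ⟨sglA A n ((c : ℂ) • (1:A) - (h : A)),
        hmem n _ (E.sub_mem (E.smul_mem _ hone) h.2)⟩ (hsgl_pos n _ h1)
      rw [heq1] at h0
      simpa only [map_add, map_smul, smul_eq_mul, hφen, hΦ_apply] using h0
    have hv : 0 ≤ (c : ℂ) * ((r n : ℝ) : ℂ) + Φ n h := by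
      have h0 := hφpos ⟨sglA A n ((c : ℂ) • (1:A) + (h : A)),
        hmem n _ (E.add_mem (E.smul_mem _ hone) h.2)⟩ (hsgl_pos n _ h2)
      have heq2 : (⟨sglA A n ((c : ℂ) • (1:A) + (h : A)),
          hmem n _ (E.add_mem (E.smul_mem _ hone) h.2)⟩ : C0E A E)
          = (c : ℂ) • en n + ⟨sglA A n h, hmem n h h.2⟩ := by
        apply Subtype.ext
        simp only [Submodule.coe_add, SetLike.val_smul, hendef]
        rw [map_add, map_smul]
      rw [heq2] at h0
      simpa only [map_add, map_smul, smul_eq_mul, hφen, hΦ_apply] using h0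
    rw [Complex.le_def] at hu hv
    simp only [neg_one_mul, ← Complex.ofReal_mul, Complex.add_re, Complex.add_im,
      Complex.neg_re, Complex.neg_im, Complex.ofReal_re, Complex.ofReal_im,
      Complex.zero_re, Complex.zero_im, zero_add] at hu hv
    constructor
    · apply Complex.ext
      · rfl
      · simp only [Complex.ofReal_im]
        linarith [hu.2, hv.2]
    · rw [abs_le]
      constructor <;> linarith [hu.1, hv.1]
  -- the general bound `‖Φ n a‖ ≤ r n * ‖a‖`
  have key : ∀ (n : ℕ) (a : E), ‖Φ n a‖ ≤ r n * ‖(a : A)‖ := by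
    intro n a
    rcases eq_or_ne (Φ n a) 0 with h0 | h0
    · rw [h0, norm_zero]
      exact mul_nonneg (hr_nonneg n) (norm_nonneg _)
    set c : ℂ := (starRingEnd ℂ) (Φ n a) / (‖Φ n a‖ : ℝ) with hcdef
    have hc : ‖c‖ = 1 := by
      rw [hcdef, norm_div, RCLike.norm_conj, Complex.norm_real, Real.norm_eq_abs, abs_norm,
        div_self (norm_ne_zero_iff.mpr h0)]
    have hca : Φ n (c • a) = ((‖Φ n a‖ : ℝ) : ℂ) := by
      rw [map_smul, smul_eq_mul, hcdef, div_mul_eq_mul_div, RCLike.conj_mul, sq,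
        mul_div_assoc]
      have hne : ((‖Φ n a‖ : ℝ) : ℂ) ≠ 0 := by exact_mod_cast norm_ne_zero_iff.mpr h0
      field_simp
      rfl
    set b : E := c • a with hbdef
    set hsel : E := (2⁻¹ : ℂ) • (b + ⟨star (b : A), hstar _ b.2⟩) with hhsel
    set ksk : E := b - hsel with hkskdef
    have hb_split : b = hsel + ksk := by rw [hkskdef]; abel
    have hselA : ((hsel : A)) = (2⁻¹ : ℂ) • ((b : A) + star (b : A)) := rfl
    have hsel_sa : IsSelfAdjoint ((hsel : A)) := by
      rw [IsSelfAdjoint, hselA, star_smul, star_add, star_star]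
      rw [show star (2⁻¹ : ℂ) = (2⁻¹ : ℂ) by simp]
      rw [add_comm]
    have hkskA : ((ksk : A)) = (2⁻¹ : ℂ) • ((b : A) - star (b : A)) := by
      rw [hkskdef]
      show ((b : A)) - ((hsel : A)) = _
      rw [hselA]
      module
    set k' : E := (-Complex.I) • ksk with hk'def
    have hk'A : ((k' : A)) = (-Complex.I) • ((ksk : A)) := rfl
    have hk'_sa : IsSelfAdjoint ((k' : A)) := by
      rw [IsSelfAdjoint, hk'A, hkskA, smul_smul, star_smul, star_sub, star_star]
      rw [show star (-Complex.I * 2⁻¹) = Complex.I * 2⁻¹ by simp]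
      module
    have hksk_eq : ksk = Complex.I • k' := by
      rw [hk'def, smul_smul]
      rw [show Complex.I * -Complex.I = 1 by
        rw [mul_neg, Complex.I_mul_I, neg_neg]]
      rw [one_smul]
    obtain ⟨hsel_eq, hsel_bd⟩ := key_sa n hsel hsel_sa
    obtain ⟨hk'_eq, _⟩ := key_sa n k' hk'_sa
    have hsum : Φ n b = Φ n hsel + Complex.I * Φ n k' := by
      have hIk : Φ n (Complex.I • k') = Complex.I * Φ n k' := by
        rw [LinearMap.map_smul, smul_eq_mul]
      conv_lhs => rw [hb_split]
      rw [map_add, hksk_eq, hIk]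
    have hre : ‖Φ n a‖ = (Φ n hsel).re := by
      have h1 : (Φ n b).re = ‖Φ n a‖ := by rw [hbdef] at *; rw [hca]; simp
      have h2 : (Φ n k').im = 0 := by rw [hk'_eq]; simp
      have h3 : (Φ n b).re = (Φ n hsel).re + (Complex.I * Φ n k').re := by
        rw [hsum, Complex.add_re]
      rw [← h1, h3, Complex.mul_re, Complex.I_re, Complex.I_im, h2]
      ring
    have hnorm_hsel : ‖(hsel : A)‖ ≤ ‖(a : A)‖ := by
      rw [hselA]
      calc ‖(2⁻¹ : ℂ) • ((b : A) + star (b : A))‖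
          = ‖(2⁻¹ : ℂ)‖ * ‖(b : A) + star (b : A)‖ := norm_smul _ _
        _ ≤ ‖(2⁻¹ : ℂ)‖ * (‖(b : A)‖ + ‖star (b : A)‖) := by
            gcongr
            exact norm_add_le _ _
        _ = ‖(b : A)‖ := by rw [norm_star]; simp; ring
        _ = ‖(a : A)‖ := by
            rw [show ((b : A)) = c • (a : A) from rfl, norm_smul, hc, one_mul]
    calc ‖Φ n a‖ = (Φ n hsel).re := hre
      _ ≤ |(Φ n hsel).re| := le_abs_self _
      _ ≤ r n * ‖(hsel : A)‖ := hsel_bd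
      _ ≤ r n * ‖(a : A)‖ := by
          gcongr
          exact hr_nonneg n
  -- bundle into continuous linear maps and extend by Hahn-Banach
  set φn : (n : ℕ) → (E →L[ℂ] ℂ) := fun n => LinearMap.mkContinuous (Φ n) (r n) (key n)
    with hφndef
  have hφn_norm : ∀ n, ‖φn n‖ ≤ r n := fun n =>
    LinearMap.mkContinuous_norm_le _ (hr_nonneg n) _
  choose ψ hψ_ext hψ_norm using fun n => exists_extension_norm_eq E (φn n)
  have hψnorm : ∀ n, ‖ψ n‖ ≤ r n := fun n => (hψ_norm n) ▸ hφn_norm n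
  have hψ1 : ∀ n, ψ n 1 = ((r n : ℝ) : ℂ) := by
    intro n
    rw [hψ_ext n ⟨1, hone⟩]
    show Φ n ⟨1, hone⟩ = _
    rw [hΦ_apply]
    exact hφen n
  have hψpos : ∀ (n : ℕ) (x : A), 0 ≤ x → 0 ≤ ψ n x := fun n x hx =>
    pos_of_norm_le_apply_one A (ψ n) (r n) (hr_nonneg n) (hψ1 n) (hψnorm n) x hx
  -- summability of the norms
  have coe_sum : ∀ (s : Finset ℕ) (g : ℕ → C0E A E),
      ((∑ i ∈ s, g i : C0E A E) : C₀(ℕ, A)) = ∑ i ∈ s, (g i : C₀(ℕ, A)) :=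
    fun s g => map_sum ((C0E A E).subtype) g s
  have hsum_r : ∀ s : Finset ℕ, ∑ i ∈ s, r i ≤ 1 := by
    intro s
    have h1 : ∑ i ∈ s, r i = (φ (∑ i ∈ s, en i)).re := by
      rw [map_sum, Complex.re_sum]
    rw [h1]
    calc (φ (∑ i ∈ s, en i)).re ≤ ‖φ (∑ i ∈ s, en i)‖ := by
          exact Complex.re_le_norm _
      _ ≤ ‖((∑ i ∈ s, en i : C0E A E) : C₀(ℕ, A))‖ := hφnorm _
      _ ≤ 1 := by
          rw [coe_sum, ← ZeroAtInftyContinuousMap.norm_toBCF_eq_norm]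
          refine BoundedContinuousFunction.norm_le zero_le_one |>.mpr fun m => ?_
          show ‖(∑ i ∈ s, (sglA A i 1 : C₀(ℕ, A))) m‖ ≤ 1
          rw [sum_C0_apply]
          simp only [sglA_apply]
          rw [Finset.sum_ite_eq]
          split <;> simp
  have hr_summable : Summable r := summable_of_sum_le (fun n => hr_nonneg n) hsum_r
  have hr_tsum : ∑' n, r n ≤ 1 := Summable.tsum_le_of_sum_le hr_summable hsum_r
  -- assembling the global functional
  have hcoe_norm : ∀ (f : C₀(ℕ, A)) (n : ℕ), ‖f n‖ ≤ ‖f‖ := by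
    intro f n
    rw [← ZeroAtInftyContinuousMap.norm_toBCF_eq_norm]
    exact f.toBCF.norm_coe_le_norm n
  have hbound : ∀ (f : C₀(ℕ, A)) (n : ℕ), ‖ψ n (f n)‖ ≤ r n * ‖f‖ := by
    intro f n
    calc ‖ψ n (f n)‖ ≤ ‖ψ n‖ * ‖f n‖ := (ψ n).le_opNorm _
      _ ≤ r n * ‖f‖ := by
          gcongr
          · exact (norm_nonneg _).trans (hψnorm n)
          · exact hψnorm n
          · exact hcoe_norm f n
  have hsummable : ∀ f : C₀(ℕ, A), Summable (fun n => ψ n (f n)) := fun f =>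
    Summable.of_norm_bounded (hr_summable.mul_right ‖f‖) (hbound f)
  have hnsummable : ∀ f : C₀(ℕ, A), Summable (fun n => ‖ψ n (f n)‖) := fun f =>
    (hr_summable.mul_right ‖f‖).of_nonneg_of_le (fun n => norm_nonneg _) (hbound f)
  set Ψ₀ : C₀(ℕ, A) →ₗ[ℂ] ℂ :=
    { toFun := fun f => ∑' n, ψ n (f n)
      map_add' := fun f g => by
        show (∑' n, ψ n ((f + g) n)) = (∑' n, ψ n (f n)) + ∑' n, ψ n (g n)
        rw [← Summable.tsum_add (hsummable f) (hsummable g)]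
        exact tsum_congr fun n => by
          rw [show ((f + g) n) = f n + g n from rfl, map_add]
      map_smul' := fun c f => by
        show (∑' n, ψ n ((c • f) n)) = c * ∑' n, ψ n (f n)
        rw [← tsum_mul_left]
        exact tsum_congr fun n => by
          rw [show ((c • f) n) = c • f n from rfl, map_smul, smul_eq_mul] } with hΨ₀def
  have hΨ₀_apply : ∀ f, Ψ₀ f = ∑' n, ψ n (f n) := fun f => rfl
  have hΨ₀_bound : ∀ f, ‖Ψ₀ f‖ ≤ 1 * ‖f‖ := by
    intro f
    rw [hΨ₀_apply]
    calc ‖∑' n, ψ n (f n)‖ ≤ ∑' n, ‖ψ n (f n)‖ := norm_tsum_le_tsum_norm (hnsummable f)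
      _ ≤ ∑' n, (r n * ‖f‖) :=
          Summable.tsum_le_tsum (hbound f) (hnsummable f) (hr_summable.mul_right ‖f‖)
      _ = (∑' n, r n) * ‖f‖ := tsum_mul_right
      _ ≤ 1 * ‖f‖ := mul_le_mul_of_nonneg_right hr_tsum (norm_nonneg f)
  refine ⟨Ψ₀.mkContinuous 1 hΨ₀_bound, LinearMap.mkContinuous_norm_le _ zero_le_one _, ?_, ?_⟩
  · -- positivity
    intro f hf
    show 0 ≤ ∑' n, ψ n (f n)
    have hre_nonneg : ∀ n, 0 ≤ (ψ n (f n)).re := fun n =>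
      (Complex.le_def.mp (hψpos n (f n) (hf n))).1
    have him_zero : ∀ n, (ψ n (f n)).im = 0 := fun n => by
      simpa using (Complex.le_def.mp (hψpos n (f n) (hf n))).2.symm
    have hterm : ∀ n, ψ n (f n) = (((ψ n (f n)).re : ℝ) : ℂ) := fun n =>
      Complex.ext rfl (by simp [him_zero n])
    calc (0 : ℂ) ≤ (((∑' n, (ψ n (f n)).re : ℝ)) : ℂ) :=
          Complex.zero_le_real.mpr (tsum_nonneg hre_nonneg)
      _ = ∑' n, ψ n (f n) := by
          rw [Complex.ofReal_tsum]
          exact tsum_congr fun n => (hterm n).symm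
  · -- extension property
    intro f
    show ∑' n, ψ n ((f : C₀(ℕ, A)) n) = φ f
    set F : ℕ → C0E A E := fun N => ∑ n ∈ Finset.range N,
      ⟨sglA A n ((f : C₀(ℕ, A)) n), hmem n _ (f.2 n)⟩ with hFdef
    have hpartial : ∀ N, ∑ n ∈ Finset.range N, ψ n ((f : C₀(ℕ, A)) n) = φ (F N) := by
      intro N
      rw [hFdef, map_sum]
      refine Finset.sum_congr rfl fun n _ => ?_
      rw [hψ_ext n ⟨(f : C₀(ℕ, A)) n, f.2 n⟩]
      rfl
    have hlim : Filter.Tendsto (fun N => ∑ n ∈ Finset.range N, ψ n ((f : C₀(ℕ, A)) n))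
        Filter.atTop (nhds (∑' n, ψ n ((f : C₀(ℕ, A)) n))) :=
      (hsummable (f : C₀(ℕ, A))).hasSum.tendsto_sum_nat
    have htail : Filter.Tendsto (fun N => φ (F N)) Filter.atTop (nhds (φ f)) := by
      rw [tendsto_iff_norm_sub_tendsto_zero]
      have hdiff : ∀ N, φ (F N) - φ f = φ (F N + (-1 : ℂ) • f) := by
        intro N
        rw [map_add, map_smul, smul_eq_mul, neg_one_mul, sub_eq_add_neg]
      have hb : ∀ N, ‖φ (F N) - φ f‖ ≤ ‖((F N + (-1 : ℂ) • f : C0E A E) : C₀(ℕ, A))‖ := by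
        intro N
        rw [hdiff]
        exact hφnorm _
      refine squeeze_zero (fun N => norm_nonneg _) hb ?_
      -- the truncation converges in norm
      refine Metric.tendsto_atTop.mpr fun ε hε => ?_
      have hzero := zero_at_infty (f : C₀(ℕ, A))
      rw [cocompact_eq_atTop, Metric.tendsto_atTop] at hzero
      obtain ⟨N₀, hN₀⟩ := hzero (ε / 2) (half_pos hε)
      refine ⟨N₀, fun N hN => ?_⟩
      rw [Real.dist_eq, sub_zero, abs_norm]
      have hval : ∀ m, ‖((F N + (-1 : ℂ) • f : C0E A E) : C₀(ℕ, A)) m‖ ≤ ε / 2 := by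
        intro m
        have hcoe : ((F N + (-1 : ℂ) • f : C0E A E) : C₀(ℕ, A)) m
            = (∑ n ∈ Finset.range N, (sglA A n ((f : C₀(ℕ, A)) n) : C₀(ℕ, A))) m
              - (f : C₀(ℕ, A)) m := by
          have h1 : ((F N + (-1 : ℂ) • f : C0E A E) : C₀(ℕ, A))
              = (∑ n ∈ Finset.range N, (sglA A n ((f : C₀(ℕ, A)) n) : C₀(ℕ, A)))
                - (f : C₀(ℕ, A)) := by
            have h2 : (-1 : ℂ) • ((f : C0E A E) : C₀(ℕ, A))
                = -((f : C0E A E) : C₀(ℕ, A)) := by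
              ext m
              show (-1 : ℂ) • (((f : C0E A E) : C₀(ℕ, A)) m) = -(((f : C0E A E) : C₀(ℕ, A)) m)
              rw [neg_smul, one_smul]
            rw [Submodule.coe_add, SetLike.val_smul, hFdef, coe_sum, h2, sub_eq_add_neg]
          rw [h1]
          rfl
        rw [hcoe, sum_C0_apply]
        simp only [sglA_apply]
        rw [Finset.sum_ite_eq]
        by_cases hm : m ∈ Finset.range N
        · rw [if_pos hm, sub_self, norm_zero]
          exact (half_pos hε).le
        · rw [if_neg hm, zero_sub, norm_neg]
          have : N₀ ≤ m := by
            simp only [Finset.mem_range, not_lt] at hm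
            omega
          have := hN₀ m this
          rw [dist_zero_right] at this
          exact this.le
      calc ‖((F N + (-1 : ℂ) • f : C0E A E) : C₀(ℕ, A))‖ ≤ ε / 2 := by
            rw [← ZeroAtInftyContinuousMap.norm_toBCF_eq_norm]
            exact BoundedContinuousFunction.norm_le (half_pos hε).le |>.mpr hval
        _ < ε := half_lt_self hε
    have := htail.congr' (Filter.Eventually.of_forall fun N => (hpartial N).symm)
    exact tendsto_nhds_unique hlim this
end
end

section
/- Let E be an operator system in B(H) and let E₀ := Span_ℂ{ Σ_{i,j=1}^d conj(η_i)·ξ_j·X_{ij} : d ≥ 1, X ∈ M_d(E)_+, ξ, η ∈ ℂ^d }. Let f : E → ℂ be a continuous linear functional vanishing on E₀, and define θ : E → M₂(ℂ) by θ(x) = [[0, f(x)], [conj(f(x*)), 0]]. Then θ is completely positive: for every d ≥ 1 and every X ∈ M_d(E)_+, the 2d×2d complex matrix indexed by pairs (i,a), (j,b) with i,j ∈ {1,…,d} and a,b ∈ {1,2}, whose ((i,a),(j,b)) entry is the (a,b) entry of θ(X_{ij}), is positive semidefinite. -/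
/-!
Statement 12: If `f : E → ℂ` is a continuous functional vanishing on the span
`E₀` of compressions of positive matrices over the operator system `E`, then
`θ(x) = [[0, f(x)], [conj (f(x*)), 0]]` is a completely positive map `E → M₂(ℂ)`.
-/

open scoped ComplexOrder

noncomputable section

/-- Positive semidefiniteness of a complex matrix. -/
def MatPosC {ι : Type} [Fintype ι] (M : Matrix ι ι ℂ) : Prop :=
  ∀ v : ι → ℂ, 0 ≤ ∑ i, ∑ j, (starRingEnd ℂ) (v i) * M i j * v j

/-- Each entry of a positive matrix over `E` lies in `E₀`. -/
lemma entry_mem_span_s12 {H : Type} [NormedAddCommGroup H] [InnerProductSpace ℂ H]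
    (E : Submodule ℂ (H →L[ℂ] H)) {d : ℕ}
    (X : Matrix (Fin d) (Fin d) (H →L[ℂ] H))
    (hmem : ∀ i j, X i j ∈ E) (hpos : MatPosOp X) (i j : Fin d) :
    X i j ∈ Submodule.span ℂ
      {y : H →L[ℂ] H | ∃ (d : ℕ) (_ : 1 ≤ d) (X : Matrix (Fin d) (Fin d) (H →L[ℂ] H))
        (ξ η : Fin d → ℂ), (∀ i j, X i j ∈ E) ∧ MatPosOp X ∧
        y = ∑ i, ∑ j, ((starRingEnd ℂ) (η i) * ξ j) • X i j} := by
  apply Submodule.subset_span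
  refine ⟨d, i.pos, X, Pi.single j 1, Pi.single i 1, hmem, hpos, ?_⟩
  have : ∀ i' j', ((starRingEnd ℂ) (Pi.single (M := fun _ => ℂ) i 1 i') * Pi.single (M := fun _ => ℂ) j 1 j') • X i' j'
      = if i' = i ∧ j' = j then X i j else 0 := by
    intro i' j'
    by_cases h1 : i' = i <;> by_cases h2 : j' = j <;>
      simp [Pi.single_apply, h1, h2]
  simp only [this, ite_and]
  rw [Finset.sum_eq_single i (fun b _ hb => by simp [hb]) (by simp),
      Finset.sum_eq_single j (fun b _ hb => by simp [hb]) (by simp)]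
  simp

/-- The conjugate transpose of a positive matrix of operators is positive. -/
lemma matPosOp_star {H : Type} [NormedAddCommGroup H] [InnerProductSpace ℂ H]
    [CompleteSpace H] {d : ℕ}
    (X : Matrix (Fin d) (Fin d) (H →L[ℂ] H)) (hpos : MatPosOp X) :
    MatPosOp (fun i j => star (X j i)) := by
  intro v
  have hS := hpos v
  have key : (∑ i, ∑ j, (inner ℂ ((star (X j i)) (v j)) (v i) : ℂ))
      = (starRingEnd ℂ) (∑ i, ∑ j, (inner ℂ (X i j (v j)) (v i) : ℂ)) := by
    rw [map_sum, Finset.sum_comm]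
    refine Finset.sum_congr rfl fun i _ => ?_
    rw [map_sum]
    refine Finset.sum_congr rfl fun j _ => ?_
    rw [ContinuousLinearMap.star_eq_adjoint, ContinuousLinearMap.adjoint_inner_left,
      ← inner_conj_symm]
  rw [key]
  have him : (∑ i, ∑ j, (inner ℂ (X i j (v j)) (v i) : ℂ)).im = 0 := by
    exact (Complex.nonneg_iff.mp hS).2.symm
  rw [Complex.conj_eq_iff_im.mpr him]
  exact hS

theorem stmt12 {H : Type} [NormedAddCommGroup H] [InnerProductSpace ℂ H]
    [CompleteSpace H]
    (E : Submodule ℂ (H →L[ℂ] H)) (hE : IsClosed (E : Set (H →L[ℂ] H)))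
    (hstar : ∀ x ∈ E, star x ∈ E)
    (E₀ : Submodule ℂ (H →L[ℂ] H))
    (hE₀ : E₀ = Submodule.span ℂ
      {y : H →L[ℂ] H | ∃ (d : ℕ) (_ : 1 ≤ d) (X : Matrix (Fin d) (Fin d) (H →L[ℂ] H))
        (ξ η : Fin d → ℂ), (∀ i j, X i j ∈ E) ∧ MatPosOp X ∧
        y = ∑ i, ∑ j, ((starRingEnd ℂ) (η i) * ξ j) • X i j})
    (f : E →L[ℂ] ℂ)
    (hf : ∀ x : E, (x : H →L[ℂ] H) ∈ E₀ → f x = 0)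
    (θ : E → Matrix (Fin 2) (Fin 2) ℂ)
    (hθ : ∀ (x : H →L[ℂ] H) (hx : x ∈ E),
      θ ⟨x, hx⟩ = !![0, f ⟨x, hx⟩; (starRingEnd ℂ) (f ⟨star x, hstar x hx⟩), 0]) :
    ∀ (d : ℕ) (X : Matrix (Fin d) (Fin d) E),
      MatPosOp (fun i j => (X i j : H →L[ℂ] H)) →
        MatPosC (fun p q : Fin d × Fin 2 => θ (X p.1 q.1) p.2 q.2) := by
  intro d X hX
  have hmem : ∀ i j, ((X i j : H →L[ℂ] H)) ∈ E := fun i j => (X i j).2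
  -- every entry of θ applied to X i j vanishes
  have hzero : ∀ (i j : Fin d) (a b : Fin 2), θ (X i j) a b = 0 := by
    intro i j a b
    have h1 : (f ⟨(X i j : H →L[ℂ] H), hmem i j⟩ : ℂ) = 0 := by
      apply hf
      rw [hE₀]
      exact entry_mem_span_s12 E _ hmem hX i j
    have h2 : (f ⟨star (X i j : H →L[ℂ] H), hstar _ (hmem i j)⟩ : ℂ) = 0 := by
      apply hf
      rw [hE₀]
      exact entry_mem_span_s12 E (fun i j => star ((X j i : H →L[ℂ] H)))
        (fun i j => hstar _ (hmem j i)) (matPosOp_star _ hX) j i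
    have hXe : X i j = ⟨(X i j : H →L[ℂ] H), hmem i j⟩ := rfl
    rw [hXe, hθ _ (hmem i j), h1, h2]
    fin_cases a <;> fin_cases b <;> simp
  intro v
  have : ∀ p ∈ (Finset.univ : Finset (Fin d × Fin 2)),
      (∑ q, (starRingEnd ℂ) (v p) * θ (X p.1 q.1) p.2 q.2 * v q) = 0 := by
    intro p _
    apply Finset.sum_eq_zero
    intro q _
    rw [hzero]
    ring
  rw [Finset.sum_eq_zero this]
end
end
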